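/- arXiv:2108.09517 — 3 statements merged into one kernel-verified Lean document; each statement's English description precedes it below -/
import Mathlib

section
/- Let 𝒜 be a commutative unital complex semisimple Banach algebra with maximal ideal space M_𝒜, and let A ∈ 𝒜^{n×n}, B ∈ 𝒜^{m×m} be such that for all φ ∈ M_𝒜, σ(Â(φ)) ∩ σ(B̂(φ)) = ∅. Then for every C ∈ 𝒜^{n×m} there exists a unique X ∈ 𝒜^{n×m} with AX − XB = C. -/
/-!
Vectorizing `X`, the Sylvester operator `X ↦ A * X - X * B` becomes multiplication by the
Kronecker matrix `S = 1 ⊗ A - Bᵀ ⊗ 1`, so it is bijective as soon as `det S` is a unit of `𝒜`.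
An element of a commutative complex Banach algebra is a unit when no character vanishes on it,
and a character `φ` maps `det S` to the determinant of the same matrix built from `Â(φ)`, `B̂(φ)`.
That determinant is nonzero by the scalar Sylvester theorem: `A X = X B` gives
`χ_B(A) X = X χ_B(B) = 0`, and `χ_B(A)` is invertible by the spectral mapping theorem because the
roots of `χ_B` are the eigenvalues of `B`, none of which is an eigenvalue of `A`.
-/

open WeakDual Polynomial Matrix
open scoped Kronecker

namespace Matrix

variable {R : Type*} {m n : Type*} [DecidableEq m] [DecidableEq n]

def sylvesterMatrix [Ring R] (A : Matrix m m R) (B : Matrix n n R) : Matrix (n × m) (n × m) R :=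
  1 ⊗ₖ A - Bᵀ ⊗ₖ 1

theorem sylvesterMatrix_map {S : Type*} [Ring R] [Ring S] (f : R →+* S) (A : Matrix m m R)
    (B : Matrix n n R) : (sylvesterMatrix A B).map f = sylvesterMatrix (A.map f) (B.map f) := by
  ext
  simp [sylvesterMatrix, one_apply, apply_ite f]

variable [Fintype m] [Fintype n]

theorem sylvesterMatrix_mulVec_vec [CommRing R] (A : Matrix m m R) (B : Matrix n n R)
    (X : Matrix m n R) : sylvesterMatrix A B *ᵥ vec X = vec (A * X - X * B) := by
  rw [sylvesterMatrix, sub_mulVec, kronecker_mulVec_vec, kronecker_mulVec_vec, vec_sub,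
    transpose_one, Matrix.mul_one, Matrix.one_mul, transpose_transpose]

theorem bijective_mul_sub_mul_of_isUnit_det [CommRing R] {A : Matrix m m R} {B : Matrix n n R}
    (h : IsUnit (sylvesterMatrix A B).det) :
    Function.Bijective fun X : Matrix m n R => A * X - X * B := by
  rw [← isUnit_iff_isUnit_det] at h
  have hS : Function.Bijective (sylvesterMatrix A B).mulVec :=
    ⟨mulVec_injective_of_isUnit h, mulVec_surjective_iff_isUnit.2 h⟩
  rw [← vec_bijective.of_comp_iff']
  convert hS.comp vec_bijective using 1
  ext X : 1
  exact (sylvesterMatrix_mulVec_vec A B X).symm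

theorem mul_aeval_eq_aeval_mul_of_mul_eq_mul [CommRing R] {A : Matrix m m R} {B : Matrix n n R}
    {X : Matrix m n R} (hX : A * X = X * B) (p : R[X]) : aeval A p * X = X * aeval B p := by
  induction p using Polynomial.induction_on' with
  | add p q hp hq => rw [map_add, map_add, Matrix.add_mul, Matrix.mul_add, hp, hq]
  | monomial k c =>
    have hpow : A ^ k * X = X * B ^ k := by
      induction k with
      | zero => simp
      | succ k ih =>
        rw [pow_succ, pow_succ, Matrix.mul_assoc, hX, ← Matrix.mul_assoc, ih, Matrix.mul_assoc]
    simp only [aeval_monomial, Algebra.algebraMap_eq_smul_one, Matrix.smul_mul, Matrix.mul_smul,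
      Matrix.one_mul, hpow]

theorem eq_zero_of_mul_eq_mul_of_disjoint_spectrum {K : Type*} [Field K] [IsAlgClosed K]
    {A : Matrix m m K} {B : Matrix n n K} (hAB : Disjoint (spectrum K A) (spectrum K B))
    {X : Matrix m n K} (hX : A * X = X * B) : X = 0 := by
  cases isEmpty_or_nonempty n
  · exact Subsingleton.elim _ _
  have hdeg : 0 < B.charpoly.degree := by
    rw [← natDegree_pos_iff_degree_pos, charpoly_natDegree_eq_dim]
    exact Fintype.card_pos
  have hunit : IsUnit (aeval A B.charpoly) := by
    rw [← spectrum.zero_notMem_iff K, spectrum.map_polynomial_aeval_of_degree_pos A _ hdeg]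
    rintro ⟨μ, hμA, hμ⟩
    exact hAB.notMem_of_mem_left hμA (mem_spectrum_of_isRoot_charpoly hμ)
  have hzero : aeval A B.charpoly * X = 0 := by
    rw [mul_aeval_eq_aeval_mul_of_mul_eq_mul hX, aeval_self_charpoly, Matrix.mul_zero]
  obtain ⟨u, hu⟩ := hunit
  calc X = (↑u⁻¹ * ↑u : Matrix m m K) * X := by rw [u.inv_mul, Matrix.one_mul]
    _ = 0 := by rw [Matrix.mul_assoc, hu, hzero, Matrix.mul_zero]

theorem det_sylvesterMatrix_ne_zero {K : Type*} [Field K] [IsAlgClosed K]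
    {A : Matrix m m K} {B : Matrix n n K} (hAB : Disjoint (spectrum K A) (spectrum K B)) :
    (sylvesterMatrix A B).det ≠ 0 := by
  intro hdet
  obtain ⟨v, hv0, hv⟩ := exists_mulVec_eq_zero_iff.2 hdet
  obtain ⟨X, rfl⟩ := vec_bijective.surjective v
  rw [sylvesterMatrix_mulVec_vec, ← vec_zero, vec_inj, sub_eq_zero] at hv
  exact hv0 (by rw [eq_zero_of_mul_eq_mul_of_disjoint_spectrum hAB hv, vec_zero])

theorem isUnit_det_sylvesterMatrix {𝒜 : Type*} [NormedCommRing 𝒜] [NormedAlgebra ℂ 𝒜]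
    [CompleteSpace 𝒜] {A : Matrix m m 𝒜} {B : Matrix n n 𝒜}
    (h : ∀ φ : characterSpace ℂ 𝒜, Disjoint (spectrum ℂ (A.map φ)) (spectrum ℂ (B.map φ))) :
    IsUnit (sylvesterMatrix A B).det := by
  by_contra hdet
  obtain ⟨φ, hφ⟩ := CharacterSpace.exists_apply_eq_zero hdet
  refine det_sylvesterMatrix_ne_zero (h φ) ?_
  calc _ = (φ : 𝒜 →+* ℂ) (sylvesterMatrix A B).det := by
        rw [RingHom.map_det, RingHom.mapMatrix_apply, sylvesterMatrix_map]; rfl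
    _ = 0 := hφ

end Matrix

theorem sylvester_banach_algebra_general (n m : ℕ)
    {𝒜 : Type*} [NormedCommRing 𝒜] [NormedAlgebra ℂ 𝒜] [CompleteSpace 𝒜]
    (A : Matrix (Fin n) (Fin n) 𝒜) (B : Matrix (Fin m) (Fin m) 𝒜)
    (h : ∀ φ : characterSpace ℂ 𝒜,
      spectrum ℂ (A.map φ) ∩ spectrum ℂ (B.map φ) = ∅) :
    ∀ C : Matrix (Fin n) (Fin m) 𝒜, ∃! X : Matrix (Fin n) (Fin m) 𝒜, A * X - X * B = C :=
  (bijective_mul_sub_mul_of_isUnit_det <| isUnit_det_sylvesterMatrix fun φ =>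
    Set.disjoint_iff_inter_eq_empty.2 (h φ)).existsUnique

theorem sylvester_banach_algebra (n m : ℕ)
    {𝒜 : Type*} [NormedCommRing 𝒜] [NormedAlgebra ℂ 𝒜] [CompleteSpace 𝒜] [Nontrivial 𝒜]
    (hss : ∀ a : 𝒜, (∀ φ : characterSpace ℂ 𝒜, φ a = 0) → a = 0)
    (A : Matrix (Fin n) (Fin n) 𝒜) (B : Matrix (Fin m) (Fin m) 𝒜)
    (h : ∀ φ : characterSpace ℂ 𝒜,
      spectrum ℂ (A.map φ) ∩ spectrum ℂ (B.map φ) = ∅) :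
    ∀ C : Matrix (Fin n) (Fin m) 𝒜, ∃! X : Matrix (Fin n) (Fin m) 𝒜, A * X - X * B = C :=
  sylvester_banach_algebra_general n m A B h
end

section
/- Let 𝒜 be a commutative unital complex semisimple Banach algebra, A ∈ 𝒜^{n×n}, B ∈ 𝒜^{m×m}, and suppose that for every C ∈ 𝒜^{n×m} the block matrices [[A, 0],[0, B]] and [[A, C],[0, B]] are similar in 𝒜^{(n+m)×(n+m)}. Then for every φ ∈ M_𝒜, σ(Â(φ)) ∩ σ(B̂(φ)) = ∅. -/
/-!
A character `φ` carries the similarities over `𝒜` to similarities over `ℂ` between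
`[[Â(φ), 0], [0, B̂(φ)]]` and `[[Â(φ), C], [0, B̂(φ)]]` for every complex `C`. If `λ` were a common
eigenvalue, subtracting these matrices from `λ` would make both diagonal blocks singular. Then
`C = u wᵀ`, with `u` outside the range of the first block and `w` pairing nontrivially with a null
vector of the second, gives an upper triangular block matrix with a strictly smaller kernel,
which similar matrices cannot have.
-/

open WeakDual Matrix Module

theorem IsConj.algebraMap_sub {R S : Type*} [CommSemiring R] [Ring S] [Algebra R S] {a b : S}
    (r : R) (h : IsConj a b) : IsConj (algebraMap R S r - a) (algebraMap R S r - b) := by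
  obtain ⟨c, hc⟩ := h
  exact ⟨c, SemiconjBy.sub_right (Algebra.commute_algebraMap_right r (c : S)) hc⟩

namespace Matrix

variable {ι κ : Type*} [Fintype ι] [Fintype κ]

theorem algebraMap_sub_fromBlocks {R : Type*} [CommRing R] [DecidableEq ι] [DecidableEq κ]
    (r : R) (A : Matrix ι ι R) (B : Matrix ι κ R) (C : Matrix κ ι R) (D : Matrix κ κ R) :
    algebraMap R _ r - fromBlocks A B C D =
      fromBlocks (algebraMap R _ r - A) (-B) (-C) (algebraMap R _ r - D) := by
  ext (i | i) (j | j) <;> simp [algebraMap_matrix_apply]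

theorem rank_eq_of_isConj {R : Type*} [CommRing R] [DecidableEq ι] {M N : Matrix ι ι R}
    (h : IsConj M N) : M.rank = N.rank := by
  obtain ⟨U, hU⟩ := h
  have hN : N = U * M * (U⁻¹ : (Matrix ι ι R)ˣ) := by
    rw [hU.eq, mul_assoc, Units.mul_inv, mul_one]
  rw [hN, rank_mul_eq_left_of_isUnit_det _ _ (isUnit_det_of_invertible _),
    rank_mul_eq_right_of_isUnit_det _ _ (U.isUnit.map (detMonoidHom : Matrix ι ι R →* R))]

variable {K : Type*} [Field K]

theorem finrank_ker_mulVecLin_eq_of_isConj [DecidableEq ι] {M N : Matrix ι ι K}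
    (h : IsConj M N) :
    finrank K (LinearMap.ker M.mulVecLin) = finrank K (LinearMap.ker N.mulVecLin) := by
  have hM := M.mulVecLin.finrank_range_add_finrank_ker
  have hN := N.mulVecLin.finrank_range_add_finrank_ker
  have hrank := rank_eq_of_isConj h
  rw [rank, rank] at hrank
  omega

theorem ker_mulVecLin_fromBlocks_vecMulVec_le (A : Matrix ι ι K) (B : Matrix κ κ K)
    {u : ι → K} (hu : u ∉ LinearMap.range A.mulVecLin) (w : κ → K) :
    LinearMap.ker (fromBlocks A (vecMulVec u w) 0 B).mulVecLin ≤
      LinearMap.ker (fromBlocks A 0 0 B).mulVecLin := by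
  intro x hx
  simp only [LinearMap.mem_ker, mulVecLin_apply, fromBlocks_mulVec, ← Sum.elim_zero_zero,
    Sum.elim_eq_iff, vecMulVec_mulVec, op_smul_eq_smul, zero_mulVec, zero_add, add_zero]
    at hx ⊢
  obtain ⟨hx₁, hx₂⟩ := hx
  have hw : w ⬝ᵥ (x ∘ Sum.inr) = 0 := by
    by_contra hne
    refine hu ⟨-(w ⬝ᵥ (x ∘ Sum.inr))⁻¹ • (x ∘ Sum.inl), ?_⟩
    rw [mulVecLin_apply, mulVec_smul, eq_neg_of_add_eq_zero_left hx₁, smul_neg, neg_smul,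
      neg_neg, smul_smul, inv_mul_cancel₀ hne, one_smul]
  rw [hw, zero_smul, add_zero] at hx₁
  exact ⟨hx₁, hx₂⟩

theorem ker_mulVecLin_fromBlocks_vecMulVec_lt (A : Matrix ι ι K) {B : Matrix κ κ K}
    {u : ι → K} (hu : u ∉ LinearMap.range A.mulVecLin) {w y : κ → K} (hy : B *ᵥ y = 0)
    (hwy : w ⬝ᵥ y ≠ 0) :
    LinearMap.ker (fromBlocks A (vecMulVec u w) 0 B).mulVecLin <
      LinearMap.ker (fromBlocks A 0 0 B).mulVecLin := by
  have hu₀ : u ≠ 0 := fun h => hu ⟨0, by simp [h]⟩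
  refine SetLike.lt_iff_le_and_exists.2
    ⟨ker_mulVecLin_fromBlocks_vecMulVec_le A B hu w, Sum.elim (0 : ι → K) y, ?_, ?_⟩
  · simp [fromBlocks_mulVec, hy]
  · simp [fromBlocks_mulVec, vecMulVec_mulVec, ← Sum.elim_zero_zero, Sum.elim_eq_iff, hwy, hu₀]

variable [DecidableEq ι] [DecidableEq κ]

theorem exists_not_isConj_fromBlocks {A : Matrix ι ι K} {B : Matrix κ κ K}
    (hA : ¬IsUnit A) (hB : ¬IsUnit B) :
    ∃ C : Matrix ι κ K, ¬IsConj (fromBlocks A 0 0 B) (fromBlocks A C 0 B) := by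
  obtain ⟨u, hu⟩ : ∃ u, u ∉ LinearMap.range A.mulVecLin := by
    simpa [← mulVec_surjective_iff_isUnit, Function.Surjective] using hA
  obtain ⟨y, hy₀, hy⟩ : ∃ y, y ≠ 0 ∧ B *ᵥ y = 0 := by
    rwa [exists_mulVec_eq_zero_iff, ← not_ne_iff, ← isUnit_iff_ne_zero, ← isUnit_iff_isUnit_det]
  obtain ⟨i, hi⟩ := Function.ne_iff.1 hy₀
  refine ⟨vecMulVec u (Pi.single i 1), fun hconj => ?_⟩
  have hlt := Submodule.finrank_lt_finrank_of_lt
    (ker_mulVecLin_fromBlocks_vecMulVec_lt A hu hy (w := Pi.single i 1) (by simpa using hi))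
  exact hlt.ne (finrank_ker_mulVecLin_eq_of_isConj hconj).symm

theorem exists_not_isConj_fromBlocks_of_mem_spectrum {A : Matrix ι ι K} {B : Matrix κ κ K}
    {μ : K} (hA : μ ∈ spectrum K A) (hB : μ ∈ spectrum K B) :
    ∃ C : Matrix ι κ K, ¬IsConj (fromBlocks A 0 0 B) (fromBlocks A C 0 B) := by
  obtain ⟨C, hC⟩ := exists_not_isConj_fromBlocks hA hB
  refine ⟨-C, fun hconj => hC ?_⟩
  simpa [algebraMap_sub_fromBlocks] using hconj.algebraMap_sub μ

theorem disjoint_spectrum_map_of_forall_isConj_fromBlocks {R : Type*} [Ring R] [Algebra K R]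
    (f : R →ₐ[K] K) {A : Matrix ι ι R} {B : Matrix κ κ R}
    (h : ∀ C : Matrix ι κ R, IsConj (fromBlocks A 0 0 B) (fromBlocks A C 0 B)) :
    Disjoint (spectrum K (A.map f)) (spectrum K (B.map f)) := by
  refine Set.disjoint_left.2 fun μ hA hB => ?_
  obtain ⟨C, hC⟩ := exists_not_isConj_fromBlocks_of_mem_spectrum hA hB
  have hconj := (f.toRingHom.mapMatrix : Matrix (ι ⊕ κ) (ι ⊕ κ) R →+* _).toMonoidHom.map_isConj
    (h (C.map (algebraMap K R)))
  have hf : ⇑f ∘ algebraMap K R = id := funext f.commutes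
  exact hC (by simpa [fromBlocks_map, Matrix.map_map, hf] using hconj)

end Matrix

theorem disjoint_pointwise_spectra_of_similar_general (n m : ℕ)
    {𝒜 : Type*} [NormedCommRing 𝒜] [NormedAlgebra ℂ 𝒜]
    (A : Matrix (Fin n) (Fin n) 𝒜) (B : Matrix (Fin m) (Fin m) 𝒜)
    (h : ∀ C : Matrix (Fin n) (Fin m) 𝒜,
      IsConj (Matrix.fromBlocks A 0 0 B) (Matrix.fromBlocks A C 0 B)) :
    ∀ φ : characterSpace ℂ 𝒜, spectrum ℂ (A.map φ) ∩ spectrum ℂ (B.map φ) = ∅ := fun φ =>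
  Set.disjoint_iff_inter_eq_empty.1 <|
    disjoint_spectrum_map_of_forall_isConj_fromBlocks (AlgHomClass.toAlgHom φ) h

theorem disjoint_pointwise_spectra_of_similar (n m : ℕ)
    {𝒜 : Type*} [NormedCommRing 𝒜] [NormedAlgebra ℂ 𝒜] [CompleteSpace 𝒜] [Nontrivial 𝒜]
    (hss : ∀ a : 𝒜, (∀ φ : characterSpace ℂ 𝒜, φ a = 0) → a = 0)
    (A : Matrix (Fin n) (Fin n) 𝒜) (B : Matrix (Fin m) (Fin m) 𝒜)
    (h : ∀ C : Matrix (Fin n) (Fin m) 𝒜,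
      IsConj (Matrix.fromBlocks A 0 0 B) (Matrix.fromBlocks A C 0 B)) :
    ∀ φ : characterSpace ℂ 𝒜, spectrum ℂ (A.map φ) ∩ spectrum ℂ (B.map φ) = ∅ :=
  disjoint_pointwise_spectra_of_similar_general n m A B h
end

section
/- Roth's theorem over ℂ: Let A ∈ ℂ^{n×n}, B ∈ ℂ^{m×m}, C ∈ ℂ^{n×m}. Then [[A, 0],[0, B]] and [[A, C],[0, B]] are similar in ℂ^{(n+m)×(n+m)} if and only if there exists X ∈ ℂ^{n×m} with AX − XB = C. -/
/-!
The easy direction conjugates by `[[1, -X], [0, 1]]`. For the converse (Flanders–Wimmer) let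
`M = [[A, 0], [0, B]]`, `N = [[A, C], [0, B]]` and compare `{Z | Z M = M Z}` with
`{Z | Z M = N Z}`.
A conjugation `u M = N u` makes `Z ↦ u Z` an isomorphism between them, so they have the same
dimension. Both meet the kernel of `Z ↦ (Z₂₁, Z₂₂)` in the same subspace, and the image of the
second lies in the image of the first, so by rank–nullity the two images coincide. As
`[[0, 0], [0, 1]]` commutes with `M`, some `Z = [[a, b], [0, 1]]` satisfies `Z M = N Z`, whose
`(1, 2)` block reads `b B = A b + C`; take `X = -b`.
-/

open Matrix Module LinearMap

def intertwiners (R : Type*) {A : Type*} [CommRing R] [Ring A] [Algebra R A] (a b : A) :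
    Submodule R A :=
  ker (mulRight R a - mulLeft R b)

section Intertwiners

variable {R A : Type*} [CommRing R] [Ring A] [Algebra R A] {a b b' : A}

@[simp]
theorem mem_intertwiners {x : A} : x ∈ intertwiners R a b ↔ x * a = b * x := by
  simp [intertwiners, sub_eq_zero]

theorem mul_mem_intertwiners {x u : A} (hx : x ∈ intertwiners R a b) (hu : SemiconjBy u b b') :
    u * x ∈ intertwiners R a b' := by
  rw [mem_intertwiners] at hx ⊢
  rw [mul_assoc, hx, ← mul_assoc, hu.eq, mul_assoc]

theorem map_mulLeftLinearEquiv_intertwiners (u : Aˣ) (hu : SemiconjBy (u : A) b b') :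
    (intertwiners R a b).map (u.mulLeftLinearEquiv R A : A →ₗ[R] A) = intertwiners R a b' := by
  ext x
  rw [Submodule.mem_map_equiv, Units.symm_mulLeftLinearEquiv, Units.mulLeftLinearEquiv_apply]
  refine ⟨fun hx => ?_, fun hx => mul_mem_intertwiners hx hu.units_inv_symm_left⟩
  simpa using mul_mem_intertwiners hx hu

theorem IsConj.finrank_intertwiners_eq (h : IsConj b b') :
    finrank R (intertwiners R a b) = finrank R (intertwiners R a b') := by
  obtain ⟨u, hu⟩ := h
  exact (LinearEquiv.ofSubmodules _ _ _ (map_mulLeftLinearEquiv_intertwiners u hu)).finrank_eq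

end Intertwiners

section RankNullity

variable {K V W : Type*} [DivisionRing K] [AddCommGroup V] [Module K V] [AddCommGroup W]
  [Module K W] [FiniteDimensional K V]

theorem Submodule.finrank_map_add_finrank_ker_inf (f : V →ₗ[K] W) (p : Submodule K V) :
    finrank K (p.map f) + finrank K ↥(ker f ⊓ p) = finrank K p := by
  have hker : (ker f).comap p.subtype = (ker f ⊓ p).comap p.subtype := by
    ext x; simp
  rw [← (f.domRestrict p).finrank_range_add_finrank_ker, range_domRestrict, ker_domRestrict,
    hker, (Submodule.comapSubtypeEquivOfLe inf_le_right).finrank_eq]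

theorem Submodule.map_eq_of_le_of_finrank_eq_of_ker_inf_eq {f : V →ₗ[K] W}
    {p q : Submodule K V}
    (hle : q.map f ≤ p.map f) (hrank : finrank K p = finrank K q) (hker : ker f ⊓ p = ker f ⊓ q) :
    q.map f = p.map f := by
  refine Submodule.eq_of_le_of_finrank_eq hle ?_
  have hp := p.finrank_map_add_finrank_ker_inf f
  have hq := q.finrank_map_add_finrank_ker_inf f
  rw [hker] at hp
  omega

end RankNullity

@[simps]
def bottomBlocks (R : Type*) {l m n o : Type*} [Semiring R] :
    Matrix (m ⊕ o) (l ⊕ n) R →ₗ[R] Matrix o l R × Matrix o n R where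
  toFun Z := (Z.toBlocks₂₁, Z.toBlocks₂₂)
  map_add' _ _ := rfl
  map_smul' _ _ := rfl

section Blocks

variable {R : Type*} [CommRing R] {ι κ : Type*} [Fintype ι] [Fintype κ] [DecidableEq ι]
  [DecidableEq κ]
  (A : Matrix ι ι R) (B : Matrix κ κ R) (C : Matrix ι κ R)

theorem isConj_fromBlocks_of_sub_eq {X : Matrix ι κ R} (hX : A * X - X * B = C) :
    IsConj (fromBlocks A 0 0 B) (fromBlocks A C 0 B) := by
  refine ⟨⟨fromBlocks 1 (-X) 0 1, fromBlocks 1 X 0 1, ?_, ?_⟩, ?_⟩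
  · simp [fromBlocks_multiply, ← fromBlocks_one]
  · simp [fromBlocks_multiply, ← fromBlocks_one]
  · simp [SemiconjBy, fromBlocks_multiply, ← hX]
    abel

theorem fromBlocks_mem_intertwiners_iff (a : Matrix ι ι R) (b : Matrix ι κ R)
    (c : Matrix κ ι R) (d : Matrix κ κ R) :
    fromBlocks a b c d ∈ intertwiners R (fromBlocks A 0 0 B) (fromBlocks A C 0 B) ↔
      a * A = A * a + C * c ∧ b * B = A * b + C * d ∧ c * A = B * c ∧ d * B = B * d := by
  simp [fromBlocks_multiply, fromBlocks_inj]

theorem ker_bottomBlocks_inf_intertwiners :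
    ker (bottomBlocks R) ⊓ intertwiners R (fromBlocks A 0 0 B) (fromBlocks A C 0 B) =
      ker (bottomBlocks R) ⊓ intertwiners R (fromBlocks A 0 0 B) (fromBlocks A 0 0 B) := by
  ext Z
  obtain ⟨a, b, c, d, rfl⟩ : ∃ a b c d, Z = fromBlocks a b c d :=
    ⟨_, _, _, _, Z.fromBlocks_toBlocks.symm⟩
  simp only [Submodule.mem_inf, mem_ker, bottomBlocks_apply, toBlocks_fromBlocks₂₁,
    toBlocks_fromBlocks₂₂, Prod.mk_eq_zero, fromBlocks_mem_intertwiners_iff]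
  constructor <;> rintro ⟨⟨rfl, rfl⟩, h⟩ <;> simp_all

theorem map_bottomBlocks_intertwiners_le :
    (intertwiners R (fromBlocks A 0 0 B) (fromBlocks A C 0 B)).map (bottomBlocks R) ≤
      (intertwiners R (fromBlocks A 0 0 B) (fromBlocks A 0 0 B)).map (bottomBlocks R) := by
  rintro _ ⟨Z, hZ, rfl⟩
  obtain ⟨a, b, c, d, rfl⟩ : ∃ a b c d, Z = fromBlocks a b c d :=
    ⟨_, _, _, _, Z.fromBlocks_toBlocks.symm⟩
  rw [SetLike.mem_coe, fromBlocks_mem_intertwiners_iff] at hZ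
  refine ⟨fromBlocks 0 0 c d, ?_, by simp⟩
  rw [SetLike.mem_coe, fromBlocks_mem_intertwiners_iff]
  simp [hZ.2.2]

theorem zero_one_mem_map_bottomBlocks_intertwiners :
    ((0 : Matrix κ ι R), (1 : Matrix κ κ R)) ∈
      (intertwiners R (fromBlocks A 0 0 B) (fromBlocks A 0 0 B)).map (bottomBlocks R) :=
  ⟨fromBlocks 0 0 0 1, by rw [SetLike.mem_coe, fromBlocks_mem_intertwiners_iff]; simp, by simp⟩

theorem exists_sub_eq_of_fromBlocks_mem_intertwiners {a : Matrix ι ι R} {b : Matrix ι κ R}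
    (h : fromBlocks a b 0 1 ∈ intertwiners R (fromBlocks A 0 0 B) (fromBlocks A C 0 B)) :
    ∃ X : Matrix ι κ R, A * X - X * B = C := by
  rw [fromBlocks_mem_intertwiners_iff] at h
  refine ⟨-b, ?_⟩
  rw [Matrix.mul_neg, Matrix.neg_mul, sub_neg_eq_add, h.2.1, Matrix.mul_one]
  abel

end Blocks

theorem exists_sub_eq_of_isConj_fromBlocks {K ι κ : Type*} [Field K] [Fintype ι] [Fintype κ]
    [DecidableEq ι] [DecidableEq κ] {A : Matrix ι ι K} {B : Matrix κ κ K} {C : Matrix ι κ K}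
    (h : IsConj (fromBlocks A 0 0 B) (fromBlocks A C 0 B)) :
    ∃ X : Matrix ι κ K, A * X - X * B = C := by
  have hmap := Submodule.map_eq_of_le_of_finrank_eq_of_ker_inf_eq
    (map_bottomBlocks_intertwiners_le A B C) h.finrank_intertwiners_eq
    (ker_bottomBlocks_inf_intertwiners A B C).symm
  obtain ⟨Z, hZ, hZbot⟩ := hmap ▸ zero_one_mem_map_bottomBlocks_intertwiners A B
  rw [bottomBlocks_apply, Prod.mk.injEq] at hZbot
  rw [← Z.fromBlocks_toBlocks, hZbot.1, hZbot.2] at hZ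
  exact exists_sub_eq_of_fromBlocks_mem_intertwiners A B C hZ

theorem isConj_fromBlocks_iff_exists_sub_eq {K ι κ : Type*} [Field K] [Fintype ι] [Fintype κ]
    [DecidableEq ι] [DecidableEq κ] (A : Matrix ι ι K) (B : Matrix κ κ K) (C : Matrix ι κ K) :
    IsConj (fromBlocks A 0 0 B) (fromBlocks A C 0 B) ↔
      ∃ X : Matrix ι κ K, A * X - X * B = C :=
  ⟨exists_sub_eq_of_isConj_fromBlocks,
    fun ⟨_, hX⟩ => isConj_fromBlocks_of_sub_eq A B C hX⟩

theorem roth_removal_rule_complex (n m : ℕ)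
    (A : Matrix (Fin n) (Fin n) ℂ) (B : Matrix (Fin m) (Fin m) ℂ)
    (C : Matrix (Fin n) (Fin m) ℂ) :
    IsConj (Matrix.fromBlocks A 0 0 B) (Matrix.fromBlocks A C 0 B) ↔
      ∃ X : Matrix (Fin n) (Fin m) ℂ, A * X - X * B = C :=
  isConj_fromBlocks_iff_exists_sub_eq A B C
end
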